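/- Let n ≥ 2, p ≥ 1, let φ₁, …, φₙ : ℝ^p → ℝ and r : ℝ^p → ℝ be convex and differentiable, let C ∈ ℝ^{n×n} be a gossip matrix with positive semidefinite square root √C (C = √C·√C), let C̄ = C ⊗ I_p and √C̄ = √C ⊗ I_p, and let ρ ≥ 0. Define H : ℝ^{np} → ℝ by H(λ₁, …, λₙ) = Σᵢ (φᵢ(λᵢ) + (1/n) r(λᵢ)) + (ρ/2) λᵀ C̄ λ, and F_ρ : ℝ^{np} → ℝ ∪ {+∞} by F_ρ(y) = sup_{λ∈ℝ^{np}} (−H(λ) − ⟨y, √C̄ λ⟩). If the function λ ↦ Σᵢ φᵢ(λ) + r(λ) on ℝ^p attains its minimum at some λ* ∈ ℝ^p, then F_ρ attains its minimum: there exists y* ∈ ℝ^{np} with F_ρ(y*) finite and F_ρ(y*) ≤ F_ρ(y) for all y ∈ ℝ^{np}. -/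

import Mathlib

open scoped RealInnerProductSpace Kronecker
open Matrix

/-- The `i`-th `ℝ^p`-block of a vector in `ℝ^{np}` (indexed by `Fin n × Fin p`). -/
noncomputable def blockComp {n p : ℕ} (lam : EuclideanSpace ℝ (Fin n × Fin p)) (i : Fin n) :
    EuclideanSpace ℝ (Fin p) :=
  WithLp.toLp 2 (fun j => lam (i, j))

/-- The linear map on `ℝ^{np}` induced by `M ⊗ I_p` for an `n × n` matrix `M`. -/
noncomputable def kronIdLin (p : ℕ) {n : ℕ} (M : Matrix (Fin n) (Fin n) ℝ) :
    EuclideanSpace ℝ (Fin n × Fin p) →ₗ[ℝ] EuclideanSpace ℝ (Fin n × Fin p) :=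
  Matrix.toEuclideanLin (M ⊗ₖ (1 : Matrix (Fin p) (Fin p) ℝ))

/-!
Put `fᵢ = φᵢ + r / n` and `gᵢ = ∇fᵢ(λ*)`. Optimality of `λ*` for `Σᵢ fᵢ` gives
`Σᵢ gᵢ = 0`, so the stacked vector `g` is orthogonal to the consensus vectors, which contain
`ker √C̄`; as `√C̄` is symmetric, `g = √C̄ w` for some `w`. Take `y* = -w`. By the gradient
inequality for each `fᵢ` and `λᵀ C̄ λ = ‖√C̄ λ‖² ≥ 0`, every term of the supremum defining
`F_ρ(y*)` is at most `-Σᵢ fᵢ(λ*)`. Conversely the consensus point `(λ*, …, λ*)` is killed by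
`√C̄` and `C̄`, so it contributes exactly `-Σᵢ fᵢ(λ*)` to `F_ρ(y)` for every `y`.
-/

open scoped Gradient

section Gradient

variable {E : Type*} [NormedAddCommGroup E] [InnerProductSpace ℝ E] [CompleteSpace E]

theorem ConvexOn.add_inner_gradient_sub_le {f : E → ℝ} (hf : ConvexOn ℝ Set.univ f) {a : E}
    (hd : DifferentiableAt ℝ f a) (x : E) : f a + ⟪∇ f a, x - a⟫ ≤ f x := by
  let γ : ℝ →ᵃ[ℝ] E := AffineMap.lineMap a x
  have hdγ : HasFDerivAt f (fderiv ℝ f a) (γ 0) := by simpa [γ] using hd.hasFDerivAt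
  have hfγ : HasDerivAt (f ∘ γ) ⟪∇ f a, x - a⟫ 0 := by
    rw [inner_gradient_left]
    exact hdγ.comp_hasDerivAt 0 AffineMap.hasDerivAt_lineMap
  have := (hf.comp_affineMap γ).le_slope_of_hasDerivAt (Set.mem_univ 0) (Set.mem_univ 1)
    one_pos hfγ
  simp only [slope_def_field, Function.comp_apply, γ, AffineMap.lineMap_apply_zero,
    AffineMap.lineMap_apply_one, sub_zero, div_one] at this
  linarith

theorem sum_gradient_eq_zero_of_forall_sum_le {ι : Type*} [Fintype ι] {f : ι → E → ℝ} {a : E}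
    (hd : ∀ i, DifferentiableAt ℝ (f i) a) (hmin : ∀ x, ∑ i, f i a ≤ ∑ i, f i x) :
    ∑ i, ∇ (f i) a = 0 := by
  have hsum : HasFDerivAt (fun x => ∑ i, f i x)
      (InnerProductSpace.toDual ℝ E (∑ i, ∇ (f i) a)) a := by
    rw [map_sum]
    exact HasFDerivAt.fun_sum fun i _ => (hd i).hasGradientAt
  have hmin' : IsLocalMin (fun x => ∑ i, f i x) a := Filter.Eventually.of_forall hmin
  exact (InnerProductSpace.toDual ℝ E).map_eq_zero_iff.1 (hmin'.hasFDerivAt_eq_zero hsum)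

theorem sum_add_sum_inner_gradient_le {ι : Type*} [Fintype ι] {f : ι → E → ℝ} {a : E}
    (hf : ∀ i, ConvexOn ℝ Set.univ (f i)) (hd : ∀ i, DifferentiableAt ℝ (f i) a)
    (hg : ∑ i, ∇ (f i) a = 0) (x : ι → E) :
    ∑ i, f i a + ∑ i, ⟪∇ (f i) a, x i⟫ ≤ ∑ i, f i (x i) := by
  have hsub : ∑ i, ⟪∇ (f i) a, x i - a⟫ = ∑ i, ⟪∇ (f i) a, x i⟫ := by
    simp only [inner_sub_right, Finset.sum_sub_distrib, ← sum_inner, hg, inner_zero_left, sub_zero]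
  rw [← hsub, ← Finset.sum_add_distrib]
  exact Finset.sum_le_sum fun i _ => (hf i).add_inner_gradient_sub_le (hd i) (x i)

end Gradient

section Blocks

variable {n p : ℕ}

noncomputable def ofBlocks (g : Fin n → EuclideanSpace ℝ (Fin p)) :
    EuclideanSpace ℝ (Fin n × Fin p) :=
  WithLp.toLp 2 fun q => g q.1 q.2

@[simp]
lemma blockComp_ofBlocks (g : Fin n → EuclideanSpace ℝ (Fin p)) (i : Fin n) :
    blockComp (ofBlocks g) i = g i := rfl

lemma inner_ofBlocks_left (g : Fin n → EuclideanSpace ℝ (Fin p))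
    (v : EuclideanSpace ℝ (Fin n × Fin p)) :
    ⟪ofBlocks g, v⟫ = ∑ i, ⟪g i, blockComp v i⟫ := by
  simp only [PiLp.inner_apply, Fintype.sum_prod_type]
  rfl

lemma kronIdLin_apply (M : Matrix (Fin n) (Fin n) ℝ)
    (lam : EuclideanSpace ℝ (Fin n × Fin p)) (i : Fin n) (j : Fin p) :
    kronIdLin p M lam (i, j) = ∑ k, M i k * lam (k, j) := by
  simp [kronIdLin, toLpLin_apply, mulVec, dotProduct, Fintype.sum_prod_type, one_apply]

lemma kronIdLin_mul (A B : Matrix (Fin n) (Fin n) ℝ) :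
    kronIdLin p (A * B) = kronIdLin p A ∘ₗ kronIdLin p B := by
  rw [kronIdLin, ← mul_one (1 : Matrix (Fin p) (Fin p) ℝ), mul_kronecker_mul]
  exact toLpLin_mul_same _ _ _

lemma kronIdLin_isSymmetric {M : Matrix (Fin n) (Fin n) ℝ} (hM : M.IsHermitian) :
    (kronIdLin p M).IsSymmetric :=
  isSymmetric_toEuclideanLin_iff.2 <| by
    rw [IsHermitian, conjTranspose_kronecker, hM.eq, conjTranspose_one]

lemma inner_kronIdLin_mul_self_nonneg {R : Matrix (Fin n) (Fin n) ℝ} (hR : R.IsHermitian)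
    (lam : EuclideanSpace ℝ (Fin n × Fin p)) : 0 ≤ ⟪lam, kronIdLin p (R * R) lam⟫ := by
  rw [kronIdLin_mul, LinearMap.comp_apply, ← kronIdLin_isSymmetric hR]
  exact real_inner_self_nonneg

lemma kronIdLin_ofBlocks_const {M : Matrix (Fin n) (Fin n) ℝ} (hM : M *ᵥ (fun _ => 1) = 0)
    (x : EuclideanSpace ℝ (Fin p)) : kronIdLin p M (ofBlocks fun _ => x) = 0 := by
  ext ⟨i, j⟩
  have hrow : ∑ k, M i k = 0 := by simpa [mulVec, dotProduct] using congrFun hM i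
  simp [kronIdLin_apply, ofBlocks, ← Finset.sum_mul, hrow]

lemma exists_eq_ofBlocks_const_of_kronIdLin_eq_zero {M : Matrix (Fin n) (Fin n) ℝ}
    (hM : LinearMap.ker M.mulVecLin ≤ Submodule.span ℝ {fun _ => 1})
    {u : EuclideanSpace ℝ (Fin n × Fin p)} (hu : kronIdLin p M u = 0) :
    ∃ x, u = ofBlocks fun _ => x := by
  have hcol : ∀ j, ∃ c : ℝ, c • (fun _ => 1) = fun k => u (k, j) := fun j => by
    refine Submodule.mem_span_singleton.1 (hM ?_)
    ext i
    simpa [kronIdLin_apply, mulVec, dotProduct] using congrArg (· (i, j)) hu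
  choose c hc using hcol
  exact ⟨WithLp.toLp 2 c, by ext ⟨i, j⟩; simpa [ofBlocks] using (congrFun (hc j) i).symm⟩

lemma ofBlocks_mem_range_kronIdLin {M : Matrix (Fin n) (Fin n) ℝ} (hMh : M.IsHermitian)
    (hM : LinearMap.ker M.mulVecLin ≤ Submodule.span ℝ {fun _ => 1})
    {g : Fin n → EuclideanSpace ℝ (Fin p)} (hg : ∑ i, g i = 0) :
    ofBlocks g ∈ LinearMap.range (kronIdLin p M) := by
  rw [← (kronIdLin_isSymmetric hMh).adjoint_eq, ← LinearMap.orthogonal_ker,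
    Submodule.mem_orthogonal']
  intro u hu
  obtain ⟨x, rfl⟩ := exists_eq_ofBlocks_const_of_kronIdLin_eq_zero hM hu
  simp [inner_ofBlocks_left, ← sum_inner, hg]

end Blocks

theorem stmt7_general {n p : ℕ} (hn : 2 ≤ n) (ρ : ℝ) (hρ : 0 ≤ ρ)
    (φ : Fin n → (EuclideanSpace ℝ (Fin p) → ℝ))
    (hφconv : ∀ i, ConvexOn ℝ Set.univ (φ i))
    (hφdiff : ∀ i, Differentiable ℝ (φ i))
    (r : EuclideanSpace ℝ (Fin p) → ℝ)
    (hrconv : ConvexOn ℝ Set.univ r) (hrdiff : Differentiable ℝ r)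
    (C : Matrix (Fin n) (Fin n) ℝ)
    (hCker : LinearMap.ker (Matrix.mulVecLin C)
      = Submodule.span ℝ {(fun _ => 1 : Fin n → ℝ)})
    (R : Matrix (Fin n) (Fin n) ℝ) (hRpsd : R.PosSemidef) (hRR : R * R = C)
    (H : EuclideanSpace ℝ (Fin n × Fin p) → ℝ)
    (hH : ∀ lam, H lam
      = (∑ i : Fin n, (φ i (blockComp lam i) + (1 / (n : ℝ)) * r (blockComp lam i)))
        + ρ / 2 * ⟪lam, kronIdLin p C lam⟫)
    (F : EuclideanSpace ℝ (Fin n × Fin p) → EReal)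
    (hF : ∀ y, F y = ⨆ lam : EuclideanSpace ℝ (Fin n × Fin p),
      ((-H lam - ⟪y, kronIdLin p R lam⟫ : ℝ) : EReal))
    (lamstar : EuclideanSpace ℝ (Fin p))
    (hlamstar : ∀ lam : EuclideanSpace ℝ (Fin p),
      (∑ i : Fin n, φ i lamstar) + r lamstar ≤ (∑ i : Fin n, φ i lam) + r lam) :
    ∃ ystar : EuclideanSpace ℝ (Fin n × Fin p),
      (∃ c : ℝ, F ystar = (c : EReal)) ∧ ∀ y, F ystar ≤ F y := by
  have hkerR : LinearMap.ker R.mulVecLin = Submodule.span ℝ {fun _ => 1} := by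
    rw [← hCker, ← hRR, ← ker_mulVecLin_conjTranspose_mul_self, hRpsd.1.eq]
  have hR1 : R *ᵥ (fun _ => 1) = 0 := by
    simpa using hkerR.ge (Submodule.mem_span_singleton_self _)
  have hC1 : C *ᵥ (fun _ => 1) = 0 := by rw [← hRR, ← mulVec_mulVec, hR1, mulVec_zero]
  let f : Fin n → EuclideanSpace ℝ (Fin p) → ℝ := fun i x => φ i x + 1 / (n : ℝ) * r x
  have hfsum : ∀ x, ∑ i, f i x = (∑ i, φ i x) + r x := fun x => by
    have : (n : ℝ) ≠ 0 := by positivity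
    simp [f, Finset.sum_add_distrib, this]
  have hHf : ∀ lam, H lam = ∑ i, f i (blockComp lam i) + ρ / 2 * ⟪lam, kronIdLin p C lam⟫ :=
    hH
  have hfconv : ∀ i, ConvexOn ℝ Set.univ (f i) := fun i =>
    (hφconv i).add (hrconv.smul (by positivity))
  have hfdiff : ∀ i, DifferentiableAt ℝ (f i) lamstar := fun i =>
    ((hφdiff i).add (hrdiff.const_mul _)) lamstar
  have hgrad : ∑ i, ∇ (f i) lamstar = 0 :=
    sum_gradient_eq_zero_of_forall_sum_le hfdiff (by simpa only [hfsum] using hlamstar)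
  obtain ⟨w, hw⟩ := ofBlocks_mem_range_kronIdLin hRpsd.1 hkerR.le hgrad
  set c := -((∑ i, φ i lamstar) + r lamstar)
  have hlower : ∀ y, (c : EReal) ≤ F y := fun y => by
    rw [hF]
    refine le_iSup_of_le (ofBlocks fun _ => lamstar) (le_of_eq (congrArg _ ?_))
    simp [hHf, kronIdLin_ofBlocks_const hC1, kronIdLin_ofBlocks_const hR1, hfsum, c]
  have hupper : F (-w) ≤ c := by
    rw [hF]
    refine iSup_le fun lam => EReal.coe_le_coe_iff.2 ?_
    have hconv := sum_add_sum_inner_gradient_le hfconv hfdiff hgrad (blockComp lam)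
    have hpen : 0 ≤ ρ / 2 * ⟪lam, kronIdLin p C lam⟫ := by
      rw [← hRR]; exact mul_nonneg (by positivity) (inner_kronIdLin_mul_self_nonneg hRpsd.1 lam)
    have hlin : ⟪-w, kronIdLin p R lam⟫ = -∑ i, ⟪∇ (f i) lamstar, blockComp lam i⟫ := by
      rw [inner_neg_left, ← kronIdLin_isSymmetric hRpsd.1, hw, inner_ofBlocks_left]
    rw [hfsum] at hconv
    rw [hHf, hlin]
    linarith
  exact ⟨-w, ⟨c, le_antisymm hupper (hlower _)⟩, fun y => hupper.trans (hlower y)⟩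

/-- Existence of a solution of the dual² problem:  with `H(λ) = Σᵢ (φᵢ(λᵢ) + (1/n) r(λᵢ))
+ (ρ/2) λᵀ C̄ λ` and `F_ρ(y) = sup_λ (−H(λ) − ⟪y, √C̄ λ⟫)` (an `ℝ ∪ {+∞}`-valued function),
if `λ ↦ Σᵢ φᵢ(λ) + r(λ)` attains its minimum on `ℝ^p`, then `F_ρ` attains its minimum:
there is `y*` with `F_ρ(y*)` finite and `F_ρ(y*) ≤ F_ρ(y)` for all `y`. -/
theorem stmt7 {n p : ℕ} (hn : 2 ≤ n) (hp : 1 ≤ p) (ρ : ℝ) (hρ : 0 ≤ ρ)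
    (φ : Fin n → (EuclideanSpace ℝ (Fin p) → ℝ))
    (hφconv : ∀ i, ConvexOn ℝ Set.univ (φ i))
    (hφdiff : ∀ i, Differentiable ℝ (φ i))
    (r : EuclideanSpace ℝ (Fin p) → ℝ)
    (hrconv : ConvexOn ℝ Set.univ r) (hrdiff : Differentiable ℝ r)
    (C : Matrix (Fin n) (Fin n) ℝ) (hCsymm : C.IsSymm) (hCpsd : C.PosSemidef)
    (hCker : LinearMap.ker (Matrix.mulVecLin C)
      = Submodule.span ℝ {(fun _ => 1 : Fin n → ℝ)})
    (R : Matrix (Fin n) (Fin n) ℝ) (hRpsd : R.PosSemidef) (hRR : R * R = C)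
    (H : EuclideanSpace ℝ (Fin n × Fin p) → ℝ)
    (hH : ∀ lam, H lam
      = (∑ i : Fin n, (φ i (blockComp lam i) + (1 / (n : ℝ)) * r (blockComp lam i)))
        + ρ / 2 * ⟪lam, kronIdLin p C lam⟫)
    (F : EuclideanSpace ℝ (Fin n × Fin p) → EReal)
    (hF : ∀ y, F y = ⨆ lam : EuclideanSpace ℝ (Fin n × Fin p),
      ((-H lam - ⟪y, kronIdLin p R lam⟫ : ℝ) : EReal))
    (lamstar : EuclideanSpace ℝ (Fin p))
    (hlamstar : ∀ lam : EuclideanSpace ℝ (Fin p),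
      (∑ i : Fin n, φ i lamstar) + r lamstar ≤ (∑ i : Fin n, φ i lam) + r lam) :
    ∃ ystar : EuclideanSpace ℝ (Fin n × Fin p),
      (∃ c : ℝ, F ystar = (c : EReal)) ∧ ∀ y, F ystar ≤ F y :=
  stmt7_general hn ρ hρ φ hφconv hφdiff r hrconv hrdiff C hCker R hRpsd hRR H hH F hF lamstar
    hlamstar
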